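/- Let U, V ∈ U(2) be unitary matrices having no eigenvalue equal to -1, and define Hermitian matrices A = (I-U)(I+U)^{-1}, B = (I-V)(I+V)^{-1}, and M = (A+B)/2. Then I + M is invertible and W = (I-M)(I+M)^{-1} is unitary with no eigenvalue equal to -1; moreover W is symmetric in U and V (U★V = V★U). -/

import Mathlib

open Matrix

/-- The Cayley transform `A_U = i(I-U)(I+U)⁻¹` of a unitary `U`. -/
noncomputable def cayley (U : Matrix (Fin 2) (Fin 2) ℂ) : Matrix (Fin 2) (Fin 2) ℂ :=
  Complex.I • ((1 - U) * (1 + U)⁻¹)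

/-- The composed boundary condition `W = U ★ V`: the inverse Cayley transform of the
average `M = (A_U + A_V)/2` of the Cayley transforms, `W = (I - (-i)M)(I + (-i)M)⁻¹`. -/
noncomputable def starComp (U V : Matrix (Fin 2) (Fin 2) ℂ) : Matrix (Fin 2) (Fin 2) ℂ :=
  (1 - (-Complex.I) • ((1 / 2 : ℂ) • (cayley U + cayley V)))
    * (1 + (-Complex.I) • ((1 / 2 : ℂ) • (cayley U + cayley V)))⁻¹

/-!
For a unitary `U` with `1 + U` invertible, `K = (1 - U)(1 + U)⁻¹` commutes with `1 + U`, and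
`U Uᴴ = 1` turns `Kᴴ` into `-K`; hence `A = iK` is Hermitian. Consequently `N = -iM` is
skew-Hermitian, so `(1 ± N)ᴴ(1 ± N) = 1 + NᴴN` is positive definite and `1 ± N` are invertible.
Then `W = (1 - N)(1 + N)⁻¹` is unitary because `1 - N` and `1 + N` commute and are each other's
adjoints, and `1 + W = 2(1 + N)⁻¹` is invertible, so `-1` is not an eigenvalue of `W`.
Symmetry in `U, V` is commutativity of `A + B`.
-/

open scoped ComplexOrder

namespace Matrix

variable {n : Type*}

theorem isHermitian_I_smul_of_conjTranspose_eq_neg {K : Matrix n n ℂ} (hK : Kᴴ = -K) :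
    (Complex.I • K).IsHermitian := by
  rw [IsHermitian, conjTranspose_smul, hK, Complex.star_def, Complex.conj_I, neg_smul_neg]

variable [Fintype n] [DecidableEq n]

theorem isUnit_one_add_iff_forall_mulVec_eq_neg {K : Type*} [Field K] {U : Matrix n n K} :
    IsUnit (1 + U) ↔ ∀ v, U *ᵥ v = -v → v = 0 := by
  rw [isUnit_iff_isUnit_det, isUnit_iff_ne_zero, Ne, ← exists_mulVec_eq_zero_iff]
  simp only [add_mulVec, one_mulVec, add_eq_zero_iff_neg_eq', neg_eq_iff_eq_neg, not_exists,
    not_and]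
  exact forall_congr' fun _ => not_imp_not

variable {𝕜 : Type*} [RCLike 𝕜]

theorem conjTranspose_one_sub_mul_inv_one_add_of_mem_unitaryGroup {U : Matrix n n 𝕜}
    (hU : U ∈ unitaryGroup n 𝕜) (hU1 : IsUnit (1 + U)) :
    ((1 - U) * (1 + U)⁻¹)ᴴ = -((1 - U) * (1 + U)⁻¹) := by
  have hdet := (isUnit_iff_isUnit_det _).mp hU1
  have hcomm : Commute (1 - U) (1 + U)⁻¹ := by
    obtain ⟨u, hu⟩ := hU1
    have hcomm_u : Commute (1 - U) u :=
      hu ▸ show (1 - U) * (1 + U) = (1 + U) * (1 - U) by noncomm_ring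
    rw [← hu, ← coe_units_inv]
    exact hcomm_u.units_inv_right
  have hinv : (1 + star U)⁻¹ = (1 + U)⁻¹ * U := by
    apply inv_eq_left_inv
    rw [Matrix.mul_assoc, Matrix.mul_add, mul_one, mem_unitaryGroup_iff.mp hU, add_comm U 1,
      nonsing_inv_mul _ hdet]
  calc ((1 - U) * (1 + U)⁻¹)ᴴ = (1 + star U)⁻¹ * (1 - star U) := by
        rw [conjTranspose_mul, conjTranspose_nonsing_inv, conjTranspose_add, conjTranspose_sub,
          conjTranspose_one, ← star_eq_conjTranspose]
    _ = -((1 + U)⁻¹ * (1 - U)) := by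
        rw [hinv, Matrix.mul_assoc, Matrix.mul_sub, mul_one, mem_unitaryGroup_iff.mp hU,
          ← Matrix.mul_neg, neg_sub]
    _ = -((1 - U) * (1 + U)⁻¹) := by rw [hcomm.eq]

theorem isUnit_one_add_one_sub_mul_inv_one_add {N : Matrix n n 𝕜} (hN : IsUnit (1 + N)) :
    IsUnit (1 + (1 - N) * (1 + N)⁻¹) := by
  have hsum : 1 + (1 - N) * (1 + N)⁻¹ = (2 : 𝕜) • (1 + N)⁻¹ := calc
    1 + (1 - N) * (1 + N)⁻¹ = ((1 + N) + (1 - N)) * (1 + N)⁻¹ := by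
      rw [Matrix.add_mul, mul_nonsing_inv _ ((isUnit_iff_isUnit_det _).mp hN)]
    _ = (2 : 𝕜) • (1 + N)⁻¹ := by
      rw [add_add_sub_cancel, ← two_smul 𝕜, smul_mul_assoc, Matrix.one_mul]
  rw [hsum]
  simpa [Units.smul_def] using (isUnit_nonsing_inv_iff.mpr hN).smul (Units.mk0 (2 : 𝕜) two_ne_zero)

section SkewHermitian

variable {N : Matrix n n 𝕜}

theorem isUnit_one_add_of_conjTranspose_eq_neg (hN : Nᴴ = -N) : IsUnit (1 + N) := by
  have hpos : (1 + Nᴴ * N).PosDef := PosDef.one.add_posSemidef (posSemidef_conjTranspose_mul_self N)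
  have hgram : (1 + N)ᴴ * (1 + N) = 1 + Nᴴ * N := by
    rw [conjTranspose_add, conjTranspose_one, hN]
    noncomm_ring
  exact isUnit_of_mul_isUnit_right (hgram ▸ hpos.isUnit)

theorem isUnit_one_sub_of_conjTranspose_eq_neg (hN : Nᴴ = -N) : IsUnit (1 - N) := by
  rw [sub_eq_add_neg]
  exact isUnit_one_add_of_conjTranspose_eq_neg (by rw [conjTranspose_neg, hN])

theorem one_sub_mul_inv_one_add_mem_unitaryGroup (hN : Nᴴ = -N) :
    (1 - N) * (1 + N)⁻¹ ∈ unitaryGroup n 𝕜 := by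
  have hplus := (isUnit_iff_isUnit_det _).mp (isUnit_one_add_of_conjTranspose_eq_neg hN)
  have hminus := (isUnit_iff_isUnit_det _).mp (isUnit_one_sub_of_conjTranspose_eq_neg hN)
  have hstar : star ((1 - N) * (1 + N)⁻¹) = (1 - N)⁻¹ * (1 + N) := by
    rw [star_eq_conjTranspose, conjTranspose_mul, conjTranspose_nonsing_inv, conjTranspose_add,
      conjTranspose_sub, conjTranspose_one, hN, sub_neg_eq_add, ← sub_eq_add_neg]
  have hcomm : (1 + N) * (1 - N) = (1 - N) * (1 + N) := by noncomm_ring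
  rw [mem_unitaryGroup_iff', hstar]
  calc (1 - N)⁻¹ * (1 + N) * ((1 - N) * (1 + N)⁻¹)
      = (1 - N)⁻¹ * ((1 + N) * (1 - N)) * (1 + N)⁻¹ := by simp only [Matrix.mul_assoc]
    _ = 1 := by
      rw [hcomm, ← Matrix.mul_assoc, nonsing_inv_mul _ hminus, Matrix.one_mul,
        mul_nonsing_inv _ hplus]

end SkewHermitian

end Matrix

/-- Composition law of boundary conditions: if `U, V ∈ U(2)` have no eigenvalue `-1`,
then the Cayley transforms `A, B` are Hermitian, `I + (-i)M` with `M = (A+B)/2` is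
invertible, and `W = U ★ V` is unitary with no eigenvalue `-1`; moreover `U★V = V★U`. -/
theorem composition_law_boundary_conditions
    (U V : Matrix (Fin 2) (Fin 2) ℂ)
    (hU : U ∈ Matrix.unitaryGroup (Fin 2) ℂ) (hV : V ∈ Matrix.unitaryGroup (Fin 2) ℂ)
    (hUno : ∀ v : Fin 2 → ℂ, U.mulVec v = -v → v = 0)
    (hVno : ∀ v : Fin 2 → ℂ, V.mulVec v = -v → v = 0) :
    (cayley U).IsHermitian ∧ (cayley V).IsHermitian ∧
    IsUnit (1 + (-Complex.I) • ((1 / 2 : ℂ) • (cayley U + cayley V))) ∧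
    starComp U V ∈ Matrix.unitaryGroup (Fin 2) ℂ ∧
    (∀ v : Fin 2 → ℂ, (starComp U V).mulVec v = -v → v = 0) ∧
    starComp U V = starComp V U := by
  have hA : (cayley U).IsHermitian := isHermitian_I_smul_of_conjTranspose_eq_neg <|
    conjTranspose_one_sub_mul_inv_one_add_of_mem_unitaryGroup hU
      (isUnit_one_add_iff_forall_mulVec_eq_neg.mpr hUno)
  have hB : (cayley V).IsHermitian := isHermitian_I_smul_of_conjTranspose_eq_neg <|
    conjTranspose_one_sub_mul_inv_one_add_of_mem_unitaryGroup hV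
      (isUnit_one_add_iff_forall_mulVec_eq_neg.mpr hVno)
  have hN : ((-Complex.I) • ((1 / 2 : ℂ) • (cayley U + cayley V)))ᴴ =
      -((-Complex.I) • ((1 / 2 : ℂ) • (cayley U + cayley V))) := by
    rw [conjTranspose_smul, conjTranspose_smul, (hA.add hB).eq]
    simp only [Complex.star_def, Complex.conj_neg_I, star_div₀, star_one, star_ofNat]
    module
  have hplus := isUnit_one_add_of_conjTranspose_eq_neg hN
  exact ⟨hA, hB, hplus, one_sub_mul_inv_one_add_mem_unitaryGroup hN,
    isUnit_one_add_iff_forall_mulVec_eq_neg.mp (isUnit_one_add_one_sub_mul_inv_one_add hplus),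
    by rw [starComp, starComp, add_comm (cayley U)]⟩
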